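/- arXiv:1209.0679 — 5 statements merged into one kernel-verified Lean document; each statement's English description precedes it below -/
import Mathlib

section
/- Let a, b, c be the side lengths of a triangle with the angle opposite c equal to α, where cos(α) ≤ -1/(k+1) for some k > 0, and suppose c > a. Then (a + b - c)/(c - a) < k. -/
open Real

theorem stmt_1 (a b c k α : ℝ) (ha : 0 < a) (hb : 0 < b) (hc : 0 < c)
    (hk : 0 < k) (hα : α ∈ Set.Ioo 0 π)
    (hlaw : c ^ 2 = a ^ 2 + b ^ 2 - 2 * a * b * Real.cos α)
    (hcos : Real.cos α ≤ -(1 / (k + 1)))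
    (hca : c > a) :
    (a + b - c) / (c - a) < k := by
  have hk1 : (0:ℝ) < k + 1 := by linarith
  have hcos' : (k + 1) * Real.cos α ≤ -1 := by
    have := mul_le_mul_of_nonneg_left hcos hk1.le
    calc (k+1) * Real.cos α ≤ (k+1) * -(1/(k+1)) := this
      _ = -1 := by field_simp
  have h2 : ((k + 1) * a + b) ^ 2 < ((k + 1) * c) ^ 2 := by
    nlinarith [mul_pos ha hb, mul_pos (mul_pos ha hb) hk1, sq_nonneg b,
      mul_pos hk hk1, mul_pos hb hb, mul_pos (mul_pos hb hb) (mul_pos hk hk1)]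
  have h3 : (k + 1) * a + b < (k + 1) * c := by
    have h0 : 0 < (k + 1) * c := by positivity
    nlinarith
  rw [div_lt_iff₀ (by linarith : (0:ℝ) < c - a)]
  nlinarith
end

section
/- Let triangle psq be isosceles with |ps| = |sq|, and let q' be a point on segment sq with |pq| ≥ |pq'|. Then (|ps| + |sq|)/|pq| ≥ (|ps| + |sq'|)/|pq'|. -/
open EuclideanGeometry

theorem stmt_6 (p s q q' : EuclideanSpace ℝ (Fin 2))
    (hiso : dist p s = dist s q)
    (hq' : q' ∈ segment ℝ s q)
    (hle : dist p q' ≤ dist p q)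
    (hpq : 0 < dist p q) (hpq' : 0 < dist p q') :
    (dist p s + dist s q) / dist p q ≥ (dist p s + dist s q') / dist p q' := by
  obtain ⟨u, t, hu, ht, hut, hq'eq⟩ := hq'
  have hu1 : u = 1 - t := by linarith
  subst hu1
  set a := dist p s with ha
  have ha0 : 0 ≤ a := dist_nonneg
  set v : EuclideanSpace ℝ (Fin 2) := p - s with hv
  set w : EuclideanSpace ℝ (Fin 2) := q - s with hw
  have hvn : ‖v‖ = a := by rw [hv, ← dist_eq_norm]
  have hwn : ‖w‖ = a := by rw [hw, ← dist_eq_norm, dist_comm]; exact hiso.symm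
  have hsq : dist s q = a := by rw [hiso]
  have hsq' : dist s q' = t * a := by
    rw [← hq'eq, dist_eq_norm]
    have h1 : s - ((1 - t) • s + t • q) = t • (s - q) := by module
    rw [h1, norm_smul, Real.norm_eq_abs, abs_of_nonneg ht, ← dist_eq_norm, hsq]
  have hd : dist p q' = ‖v - t • w‖ := by
    rw [dist_eq_norm]
    congr 1
    rw [hv, hw, ← hq'eq]
    module
  have hD : dist p q = ‖v - w‖ := by
    rw [dist_eq_norm]; congr 1; rw [hv, hw]; module
  have hd2 : dist p q' ^ 2 = a ^ 2 - 2 * t * inner ℝ v w + t ^ 2 * a ^ 2 := by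
    rw [hd, ← real_inner_self_eq_norm_sq]
    simp only [inner_sub_sub_self, inner_smul_left, inner_smul_right, RCLike.conj_to_real]
    rw [real_inner_self_eq_norm_sq, real_inner_self_eq_norm_sq, hvn, hwn,
      real_inner_comm w v]
    ring
  have hD2 : dist p q ^ 2 = 2 * a ^ 2 - 2 * inner ℝ v w := by
    rw [hD, ← real_inner_self_eq_norm_sq]
    rw [inner_sub_sub_self, real_inner_self_eq_norm_sq, real_inner_self_eq_norm_sq, hvn, hwn,
      real_inner_comm w v]
    ring
  have hinner : -(a * a) ≤ inner ℝ v w := by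
    have := abs_real_inner_le_norm v w
    rw [hvn, hwn] at this
    have := neg_le_of_abs_le this
    linarith
  have hkey : (1 + t) ^ 2 * dist p q ^ 2 ≤ 4 * dist p q' ^ 2 := by
    rw [hd2, hD2]
    nlinarith [sq_nonneg (1 - t), sq_nonneg a]
  have hDt : 0 ≤ (1 + t) * dist p q := by positivity
  have h2d : (1 + t) * dist p q ≤ 2 * dist p q' := by
    nlinarith [hpq'.le]
  rw [ge_iff_le, div_le_div_iff₀ hpq' hpq, hsq, hsq']
  nlinarith [mul_nonneg ha0 (sub_nonneg.mpr h2d)]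
end

section
/- For every t > 1, the angle π/2 + arcsin(2/(3t²) + 1/(3t)) is strictly greater than 2·arcsin(1/t). -/
open Real

theorem stmt_14 (t : ℝ) (ht : 1 < t) :
    π / 2 + Real.arcsin (2 / (3 * t ^ 2) + 1 / (3 * t)) >
      2 * Real.arcsin (1 / t) := by
  have ht0 : 0 < t := by linarith
  have ht2 : 0 < t ^ 2 := by positivity
  have h1t : 1 / t < 1 := by rw [div_lt_one ht0]; exact ht
  have h1t0 : 0 < 1 / t := by positivity
  set θ := Real.arcsin (1 / t) with hθ
  have hθ0 : 0 ≤ θ := Real.arcsin_nonneg.2 h1t0.le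
  have hθpi : θ ≤ π / 2 := Real.arcsin_le_pi_div_two _
  have hsin : Real.sin θ = 1 / t := Real.sin_arcsin (by linarith) h1t.le
  set x := 2 / (3 * t ^ 2) + 1 / (3 * t) with hx
  have hx0 : 0 < x := by positivity
  have hx1 : x < 1 := by
    rw [hx]
    have h2 : 2 / (3 * t ^ 2) < 2 / 3 := by
      apply div_lt_div_of_pos_left (by norm_num) (by norm_num) (by nlinarith)
    have h3 : 1 / (3 * t) < 1 / 3 := by
      apply div_lt_div_of_pos_left (by norm_num) (by norm_num) (by nlinarith)
    linarith
  have ht0' : t ≠ 0 := ne_of_gt ht0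
  have hdiff : x - (2 / t ^ 2 - 1) = (3 * t ^ 2 + t - 4) / (3 * t ^ 2) := by
    rw [hx]; field_simp; ring
  have hxlb : 2 / t ^ 2 - 1 < x := by
    have hnum : 0 < (3 * t ^ 2 + t - 4) / (3 * t ^ 2) :=
      div_pos (by nlinarith) (by positivity)
    linarith [hdiff ▸ hnum]
  have hlb1 : -1 < 2 / t ^ 2 - 1 := by
    have : 0 < 2 / t ^ 2 := by positivity
    linarith
  have hkey : Real.sin (2 * θ - π / 2) = 2 / t ^ 2 - 1 := by
    rw [Real.sin_sub_pi_div_two, Real.cos_two_mul]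
    have hpyth := Real.sin_sq_add_cos_sq θ
    have h5 : Real.sin θ ^ 2 = 1 / t ^ 2 := by rw [hsin, div_pow, one_pow]
    linear_combination (-2) * hpyth + 2 * h5
  have harc : Real.arcsin (2 / t ^ 2 - 1) = 2 * θ - π / 2 := by
    rw [← hkey, Real.arcsin_sin (by linarith) (by linarith)]
  have hub : 2 / t ^ 2 ≤ 2 := by rw [div_le_iff₀ ht2]; nlinarith
  have hmono : Real.arcsin (2 / t ^ 2 - 1) < Real.arcsin x :=
    Real.strictMonoOn_arcsin ⟨hlb1.le, by linarith⟩ ⟨by linarith, by linarith⟩ hxlb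
  linarith [harc ▸ hmono]
end

section
/- Let 1 < t < 2, α_t = arcsin(2/(3t²)+1/(3t)), and u, v points with p' a third point such that the angle ∠(u p' v) ≥ π/2 + α_t. If δ ≤ |up'| + (2/3 + t/3)|p'v|, then δ ≤ t·|uv|. Formally: for positive reals a = |up'|, b = |p'v| and |uv|² ≥ a² + b² - 2ab·cos(π/2 + α_t), one has a + (2/3 + t/3)·b ≤ t·√(a² + b² + 2ab·sin(α_t)). -/
open Real

theorem stmt_15 (t a b : ℝ) (ht1 : 1 < t) (ht2 : t < 2) (ha : 0 < a) (hb : 0 < b) :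
    a + (2 / 3 + t / 3) * b ≤
      t * Real.sqrt (a ^ 2 + b ^ 2 +
        2 * a * b * Real.sin (Real.arcsin (2 / (3 * t ^ 2) + 1 / (3 * t)))) := by
  have ht0 : 0 < t := by linarith
  have hx1 : (2 / (3 * t ^ 2) + 1 / (3 * t) : ℝ) ≤ 1 := by
    rw [div_add_div _ _ (by positivity) (by positivity), div_le_one (by positivity)]
    nlinarith
  have hx0 : (0:ℝ) ≤ 2 / (3 * t ^ 2) + 1 / (3 * t) := by positivity
  rw [Real.sin_arcsin (by linarith) hx1]
  have hE : a ^ 2 + b ^ 2 + 2 * a * b * (2 / (3 * t ^ 2) + 1 / (3 * t)) ≥ 0 := by positivity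
  have key : (a + (2 / 3 + t / 3) * b)^2 ≤
      (t * Real.sqrt (a ^ 2 + b ^ 2 + 2 * a * b * (2 / (3 * t ^ 2) + 1 / (3 * t))))^2 := by
    rw [mul_pow, Real.sq_sqrt hE]
    have h1 : t^2 * (2 * a * b * (2 / (3 * t ^ 2) + 1 / (3 * t))) =
        2 * a * b * (2/3 + t/3) := by
      field_simp
    have h2 : (t^2 - 1) * a^2 ≥ 0 :=
      mul_nonneg (by nlinarith) (sq_nonneg a)
    have h3 : (t^2 - ((2+t)/3)^2) * b^2 ≥ 0 :=
      mul_nonneg (by nlinarith) (sq_nonneg b)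
    nlinarith [h1, h2, h3]
  calc a + (2 / 3 + t / 3) * b = Real.sqrt ((a + (2 / 3 + t / 3) * b)^2) :=
        (Real.sqrt_sq (by positivity)).symm
    _ ≤ Real.sqrt ((t * Real.sqrt (a ^ 2 + b ^ 2 + 2 * a * b * (2 / (3 * t ^ 2) + 1 / (3 * t))))^2) :=
        Real.sqrt_le_sqrt key
    _ = _ := Real.sqrt_sq (by positivity)
end

section
/- Let s be the apex of isosceles triangle psq (|ps| = |sq|), let u lie on segment sp and v lie on segment sq with the segment uv parallel to pq, or more generally with u, v chosen so that |up| ≤ |vq| and ∠(u v v') obtuse where v' ∈ sq satisfies uv' ∥ pq. Then (|us| + |sv|)/|uv| ≤ (|ps| + |sq|)/|pq|. -/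
open EuclideanGeometry Real RealInnerProductSpace

theorem stmt_16 (p s q u v : EuclideanSpace ℝ (Fin 2))
    (hiso : dist p s = dist s q)
    (hu : u ∈ segment ℝ s p) (hv : v ∈ segment ℝ s q)
    (hpq : 0 < dist p q) (huv : 0 < dist u v)
    (hcase : (∃ c : ℝ, v - u = c • (q - p)) ∨
      (dist u p ≤ dist v q ∧ ∃ v' ∈ segment ℝ s q,
        (∃ c : ℝ, v' - u = c • (q - p)) ∧ EuclideanGeometry.angle u v v' > π / 2)) :
    (dist u s + dist s v) / dist u v ≤ (dist p s + dist s q) / dist p q := by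
  clear hcase
  obtain ⟨a, b, ha, hb, hab, hu⟩ := hu
  obtain ⟨c, d, hc, hd, hcd, hv⟩ := hv
  have ha' : a = 1 - b := by linarith
  have hc' : c = 1 - d := by linarith
  subst ha' hc'
  have hus : u - s = b • (p - s) := by rw [← hu]; module
  have hvs : v - s = d • (q - s) := by rw [← hv]; module
  have hnorm : ‖p - s‖ = ‖q - s‖ := by
    have h1 : dist p s = ‖p - s‖ := dist_eq_norm p s
    have h2 : dist s q = ‖q - s‖ := by rw [dist_comm, dist_eq_norm]
    rw [h1, h2] at hiso; exact hiso
  set A := p - s with hA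
  set B := q - s with hB
  have hL : 0 < ‖A‖ := by
    rcases (norm_nonneg A).lt_or_eq with h | h
    · exact h
    · exfalso
      have hA0 : A = 0 := norm_eq_zero.mp h.symm
      have hB0 : B = 0 := by rw [← norm_eq_zero, ← hnorm]; exact h.symm
      have hp : p = s := sub_eq_zero.mp hA0
      have hq : q = s := sub_eq_zero.mp hB0
      rw [hp, hq] at hpq
      simp at hpq
  -- express distances
  have hdus : dist u s = b * ‖A‖ := by
    rw [dist_eq_norm, hus, norm_smul, Real.norm_eq_abs, abs_of_nonneg hb]
  have hdsv : dist s v = d * ‖A‖ := by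
    rw [dist_comm, dist_eq_norm, hvs, norm_smul, Real.norm_eq_abs, abs_of_nonneg hd,
      hnorm]
  have hduv : dist u v = ‖b • A - d • B‖ := by
    rw [dist_eq_norm]
    congr 1
    have : u - v = (u - s) - (v - s) := by abel
    rw [this, hus, hvs]
  have hdpq : dist p q = ‖A - B‖ := by
    rw [dist_eq_norm]
    congr 1
    simp [hA, hB]
  have hdps : dist p s = ‖A‖ := dist_eq_norm p s
  have hdsq : dist s q = ‖A‖ := by rw [dist_comm, dist_eq_norm]; exact hnorm.symm
  rw [hdus, hdsv, hduv, hdpq, hdps, hdsq]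
  rw [hdpq] at hpq
  rw [hduv] at huv
  rw [div_le_div_iff₀ huv hpq]
  have hip : |(inner ℝ A B : ℝ)| ≤ ‖A‖ * ‖B‖ := abs_real_inner_le_norm A B
  have hip' : -(‖A‖ * ‖B‖) ≤ (inner ℝ A B : ℝ) := (abs_le.mp hip).1
  have e1 : ‖b • A - d • B‖ ^ 2 =
      b ^ 2 * ‖A‖ ^ 2 - 2 * (b * d * (inner ℝ A B : ℝ)) + d ^ 2 * ‖B‖ ^ 2 := by
    rw [norm_sub_sq_real, norm_smul, norm_smul, real_inner_smul_left,
      real_inner_smul_right, Real.norm_eq_abs, Real.norm_eq_abs,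
      abs_of_nonneg hb, abs_of_nonneg hd]
    ring
  have e2 : ‖A - B‖ ^ 2 = ‖A‖ ^ 2 - 2 * (inner ℝ A B : ℝ) + ‖B‖ ^ 2 := by
    rw [norm_sub_sq_real]
  -- key squared inequality
  have key : ((b * ‖A‖ + d * ‖A‖) * ‖A - B‖) ^ 2 ≤ ((‖A‖ + ‖A‖) * ‖b • A - d • B‖) ^ 2 := by
    have expand : ((‖A‖ + ‖A‖) * ‖b • A - d • B‖) ^ 2
        - ((b * ‖A‖ + d * ‖A‖) * ‖A - B‖) ^ 2
        = 2 * ‖A‖ ^ 2 * (b - d) ^ 2 * (‖A‖ ^ 2 + (inner ℝ A B : ℝ)) := by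
      rw [mul_pow, mul_pow, e1, e2, ← hnorm]
      ring
    have hpos : 0 ≤ ‖A‖ ^ 2 + (inner ℝ A B : ℝ) := by
      have : ‖A‖ * ‖B‖ = ‖A‖ ^ 2 := by rw [← hnorm]; ring
      linarith [hip']
    have h0 : 0 ≤ 2 * ‖A‖ ^ 2 * (b - d) ^ 2 * (‖A‖ ^ 2 + (inner ℝ A B : ℝ)) :=
      mul_nonneg (by positivity) hpos
    linarith [expand]
  have hlhs : 0 ≤ (b * ‖A‖ + d * ‖A‖) * ‖A - B‖ := by positivity
  have hrhs : 0 < (‖A‖ + ‖A‖) * ‖b • A - d • B‖ := by positivity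
  exact le_of_pow_le_pow_left₀ two_ne_zero hrhs.le key
end
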